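/- Let a ∈ ℂ with a ≠ 1 and a ≠ −1. Then the quotient ℂ-vector space V = (L × L)/range(T) for the quartic curve u² = x⁴ − 2ax² + 1 has dimension exactly 5 over ℂ, with basis given by the classes ω₀ = [X⁻¹·u], ω₁ = [X⁻¹], ω₂ = [1], ω₃ = [X], ω₄ = [X²]. -/

import Mathlib

/-!
The odd part of `∂A` is `D(L)`, which contains every `Xⁿ` except `X⁻¹`. The even part is
spanned by `∂(Xⁿu) = (n + 2)Xⁿ⁺³ - 2a(n + 1)Xⁿ⁺¹ + nXⁿ⁻¹`; this three-term relation can be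
solved for `Xⁿ⁺³` when `n ≥ 0` and for `Xⁿ⁻¹` when `n < 0`, so the classes of `X⁻¹, 1, X, X²`
span the even part of the quotient. Dually, a linear form on `L` kills the even part of `∂A`
exactly when its values on the monomials satisfy the same recurrence, and such a sequence can
be prescribed arbitrarily at `-1, 0, 1, 2`. Together with the coefficient of `X⁻¹` in the odd
part this gives five linear forms on `V` dual to the five classes.
-/

open LaurentPolynomial

/-- The linear map `T(f,g) = (p * D g + w * g, D f)` on `L × L`, encoding the distinguished
derivation of the superelliptic algebra (even part `L`, odd part `L * u`), where `p = P`
and `w` is the odd-weight term `u * u' = P'/2`. -/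
noncomputable def Tgen (p w : LaurentPolynomial ℂ)
    (D : LaurentPolynomial ℂ →ₗ[ℂ] LaurentPolynomial ℂ) :
    (LaurentPolynomial ℂ × LaurentPolynomial ℂ) →ₗ[ℂ]
      (LaurentPolynomial ℂ × LaurentPolynomial ℂ) where
  toFun fg := (p * D fg.2 + w * fg.2, D fg.1)
  map_add' x y := by
    ext
    · simp only [Prod.fst_add, Prod.snd_add, map_add]
      ring_nf
    · simp [Prod.snd_add]
  map_smul' c x := by
    ext
    · simp only [Prod.smul_fst, Prod.smul_snd, map_smul, smul_add, mul_smul_comm,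
        RingHom.id_apply]
    · simp

/-- The derivation map for the quartic curve: `P = X^4 - 2aX^2 + 1`, `P'/2 = 2X^3 - 2aX`. -/
noncomputable def Tquart (a : ℂ)
    (D : LaurentPolynomial ℂ →ₗ[ℂ] LaurentPolynomial ℂ) :
    (LaurentPolynomial ℂ × LaurentPolynomial ℂ) →ₗ[ℂ]
      (LaurentPolynomial ℂ × LaurentPolynomial ℂ) :=
  Tgen (T 4 - 2 * C a * T 2 + 1) (2 * T 3 - 2 * C a * T 1) D

section ThreeTermRecurrence

variable {K M : Type*} [DivisionRing K] [AddCommGroup M] [Module K M] (α β γ : ℤ → K)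

def IsThreeTermSolution (q : ℤ → M) : Prop :=
  ∀ n, α n • q (n + 3) + β n • q (n + 1) + γ n • q (n - 1) = 0

theorem Submodule.mem_of_smul_add_smul_add_smul_eq_zero (S : Submodule K M) {a b c : K}
    {x y z : M} (ha : a ≠ 0) (h : a • x + b • y + c • z = 0) (hy : y ∈ S) (hz : z ∈ S) :
    x ∈ S := by
  have hx : a • x = -(b • y + c • z) := eq_neg_of_add_eq_zero_left (by rwa [← add_assoc])
  rw [← S.smul_mem_iff ha, hx]
  exact S.neg_mem (S.add_mem (S.smul_mem b hy) (S.smul_mem c hz))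

variable {α β γ}

/-- The relation at `n` expresses `q (n + 3)` through smaller indices when `n ≥ 0`, and
`q (n - 1)` through larger ones when `n < 0`; the measure orders `ℤ` as `0, -1, 1, -2, 2, …`. -/
theorem IsThreeTermSolution.mem {q : ℤ → M} (hq : IsThreeTermSolution α β γ q)
    (hα : ∀ n, 0 ≤ n → α n ≠ 0) (hγ : ∀ n < 0, γ n ≠ 0) {S : Submodule K M}
    (hS : ∀ m, -1 ≤ m → m ≤ 2 → q m ∈ S) (m : ℤ) : q m ∈ S :=
  if hm : -1 ≤ m ∧ m ≤ 2 then hS m hm.1 hm.2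
  else if hm' : 2 < m then by
    have h := hq (m - 3)
    rw [sub_add_cancel, show m - 3 + 1 = m - 2 by ring, show m - 3 - 1 = m - 4 by ring] at h
    exact S.mem_of_smul_add_smul_add_smul_eq_zero (hα _ (by omega)) h
      (hq.mem hα hγ hS (m - 2)) (hq.mem hα hγ hS (m - 4))
  else by
    have h : γ (m + 1) • q m + β (m + 1) • q (m + 2) + α (m + 1) • q (m + 4) = 0 := by
      rw [← hq (m + 1), add_sub_cancel_right, show m + 1 + 1 = m + 2 by ring,
        show m + 1 + 3 = m + 4 by ring]
      abel
    exact S.mem_of_smul_add_smul_add_smul_eq_zero (hγ _ (by omega)) h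
      (hq.mem hα hγ hS (m + 2)) (hq.mem hα hγ hS (m + 4))
termination_by (if m < 0 then -2 * m + 1 else 2 * m).toNat
decreasing_by all_goals split_ifs <;> omega

end ThreeTermRecurrence

section ThreeTermExtension

variable {K : Type*} [Field K] (α β γ : ℤ → K)

noncomputable def threeTermExtension (v : ℤ → K) (m : ℤ) : K :=
  if -1 ≤ m ∧ m ≤ 2 then v m
  else if 2 < m then
    -(β (m - 3) * threeTermExtension v (m - 2) + γ (m - 3) * threeTermExtension v (m - 4)) /
      α (m - 3)
  else
    -(β (m + 1) * threeTermExtension v (m + 2) + α (m + 1) * threeTermExtension v (m + 4)) /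
      γ (m + 1)
termination_by (if m < 0 then -2 * m + 1 else 2 * m).toNat
decreasing_by all_goals split_ifs <;> omega

theorem threeTermExtension_of_mem_Icc (v : ℤ → K) {m : ℤ} (hm : m ∈ Set.Icc (-1) 2) :
    threeTermExtension α β γ v m = v m := by
  rw [threeTermExtension]
  exact if_pos hm

theorem isThreeTermSolution_threeTermExtension (hα : ∀ n, 0 ≤ n → α n ≠ 0)
    (hγ : ∀ n < 0, γ n ≠ 0) (v : ℤ → K) :
    IsThreeTermSolution α β γ (threeTermExtension α β γ v) := by
  intro n
  simp only [smul_eq_mul]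
  rcases le_or_gt 0 n with hn | hn
  · rw [threeTermExtension.eq_1 α β γ v (n + 3), if_neg (by omega), if_pos (by omega),
      add_sub_cancel_right, show n + 3 - 2 = n + 1 by ring, show n + 3 - 4 = n - 1 by ring]
    field_simp [hα n hn]
    ring
  · rw [threeTermExtension.eq_1 α β γ v (n - 1), if_neg (by omega), if_neg (by omega),
      sub_add_cancel, show n - 1 + 2 = n + 1 by ring, show n - 1 + 4 = n + 3 by ring]
    field_simp [hγ n hn]
    ring

end ThreeTermExtension

namespace LaurentPolynomial

variable {R : Type*} [CommSemiring R]

noncomputable def coeffPairing (c : ℤ → R) : R[T;T⁻¹] →ₗ[R] R :=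
  Finsupp.linearCombination R c ∘ₗ (AddMonoidAlgebra.coeffLinearEquiv R).toLinearMap

@[simp]
theorem coeffPairing_T (c : ℤ → R) (n : ℤ) : coeffPairing c (T n) = c n := by
  show Finsupp.linearCombination R c (Finsupp.single n 1) = c n
  simp

theorem coeffPairing_one (c : ℤ → R) : coeffPairing c 1 = c 0 := by
  rw [← T_zero, coeffPairing_T]

theorem linearMap_ext {N : Type*} [AddCommMonoid N] [Module R N] {f g : R[T;T⁻¹] →ₗ[R] N}
    (h : ∀ n, f (T n) = g (T n)) : f = g :=
  AddMonoidAlgebra.lhom_ext' fun n => LinearMap.ext_ring (h n)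

theorem mem_of_forall_T_mem {S : Submodule R R[T;T⁻¹]} (h : ∀ n, T n ∈ S) (f : R[T;T⁻¹]) :
    f ∈ S := by
  induction f using LaurentPolynomial.induction_on' with
  | add p q hp hq => exact S.add_mem hp hq
  | C_mul_T n r => rw [← smul_eq_C_mul]; exact S.smul_mem r (h n)

end LaurentPolynomial

section Quartic

variable {M : Type*} [AddCommGroup M] [Module ℂ M] (a : ℂ)

abbrev IsQuarticSolution (q : ℤ → M) : Prop :=
  IsThreeTermSolution (fun n : ℤ => (n + 2 : ℂ)) (fun n => -2 * a * (n + 1)) (fun n => (n : ℂ))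
    q

noncomputable def quarticExtension (v : ℤ → ℂ) : ℤ → ℂ :=
  threeTermExtension (fun n : ℤ => (n + 2 : ℂ)) (fun n => -2 * a * (n + 1)) (fun n => (n : ℂ))
    v

theorem isQuarticSolution_quarticExtension (v : ℤ → ℂ) :
    IsQuarticSolution a (quarticExtension a v) :=
  isThreeTermSolution_threeTermExtension _ _ _ (fun n hn => by norm_cast; omega)
    (fun n hn => by norm_cast; omega) v

theorem quarticExtension_of_mem_Icc (v : ℤ → ℂ) {m : ℤ} (hm : m ∈ Set.Icc (-1) 2) :
    quarticExtension a v m = v m :=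
  threeTermExtension_of_mem_Icc _ _ _ v hm

variable {a} in
theorem IsQuarticSolution.mem {q : ℤ → M} (hq : IsQuarticSolution a q)
    {S : Submodule ℂ M} (hS : ∀ m, -1 ≤ m → m ≤ 2 → q m ∈ S) (m : ℤ) : q m ∈ S :=
  IsThreeTermSolution.mem hq (fun n hn => by norm_cast; omega)
    (fun n hn => by norm_cast; omega) hS m

noncomputable def quarticBasisRep : Fin 5 → LaurentPolynomial ℂ × LaurentPolynomial ℂ :=
  ![(0, T (-1)), (T (-1), 0), (1, 0), (T 1, 0), (T 2, 0)]

noncomputable def quarticDual :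
    Fin 5 → Module.Dual ℂ (LaurentPolynomial ℂ × LaurentPolynomial ℂ) :=
  ![coeffPairing (Pi.single (-1) 1) ∘ₗ LinearMap.snd ℂ _ _,
    coeffPairing (quarticExtension a (Pi.single (-1) 1)) ∘ₗ LinearMap.fst ℂ _ _,
    coeffPairing (quarticExtension a (Pi.single 0 1)) ∘ₗ LinearMap.fst ℂ _ _,
    coeffPairing (quarticExtension a (Pi.single 1 1)) ∘ₗ LinearMap.fst ℂ _ _,
    coeffPairing (quarticExtension a (Pi.single 2 1)) ∘ₗ LinearMap.fst ℂ _ _]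

theorem quarticDual_apply_quarticBasisRep (i j : Fin 5) :
    quarticDual a i (quarticBasisRep j) = if i = j then 1 else 0 := by
  fin_cases i <;> fin_cases j <;>
    simp [quarticDual, quarticBasisRep, coeffPairing_one, quarticExtension_of_mem_Icc]

variable {D : LaurentPolynomial ℂ →ₗ[ℂ] LaurentPolynomial ℂ}
  (hD : ∀ n : ℤ, D (T n) = (n : ℂ) • T (n - 1))
include hD

theorem Tquart_T_zero (n : ℤ) : Tquart a D (T n, 0) = (0, (n : ℂ) • T (n - 1)) := by
  simp [Tquart, Tgen, hD]

theorem Tquart_zero_T (n : ℤ) :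
    Tquart a D (0, T n) =
      ((n + 2 : ℂ) • T (n + 3) + (-2 * a * (n + 1)) • T (n + 1) + (n : ℂ) • T (n - 1), 0) := by
  have h1 : (T 4 : LaurentPolynomial ℂ) * T (n - 1) = T (n + 3) := by rw [← T_add]; ring_nf
  have h2 : (T 3 : LaurentPolynomial ℂ) * T n = T (n + 3) := by rw [← T_add]; ring_nf
  have h3 : (T 2 : LaurentPolynomial ℂ) * T (n - 1) = T (n + 1) := by rw [← T_add]; ring_nf
  have h4 : (T 1 : LaurentPolynomial ℂ) * T n = T (n + 1) := by rw [← T_add]; ring_nf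
  simp only [Tquart, Tgen, LinearMap.coe_mk, AddHom.coe_mk, map_zero, hD, smul_eq_C_mul,
    map_add, map_mul, map_neg, map_one, map_ofNat, Prod.mk.injEq, and_true]
  linear_combination C (n : ℂ) * h1 + 2 * h2 - 2 * C a * C (n : ℂ) * h3 - 2 * C a * h4

theorem zero_T_mem_range_Tquart {n : ℤ} (hn : n ≠ -1) :
    (0, T n) ∈ LinearMap.range (Tquart a D) := by
  have hn' : (n + 1 : ℂ) ≠ 0 := by exact_mod_cast (show n + 1 ≠ 0 by omega)
  refine ⟨((n : ℂ) + 1)⁻¹ • (T (n + 1), 0), ?_⟩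
  rw [map_smul, Tquart_T_zero a hD, add_sub_cancel_right, Prod.smul_mk, smul_zero, smul_smul,
    Int.cast_add, Int.cast_one, inv_mul_cancel₀ hn', one_smul]

theorem isQuarticSolution_mkQ_inl_T :
    IsQuarticSolution a
      fun m => ((LinearMap.range (Tquart a D)).mkQ ∘ₗ LinearMap.inl ℂ _ _) (T m) := by
  intro n
  simp only [← map_smul, ← map_add]
  rw [LinearMap.comp_apply, LinearMap.inl_apply, ← Tquart_zero_T a hD]
  exact (Submodule.Quotient.mk_eq_zero _).2 (LinearMap.mem_range_self _ _)

theorem coeffPairing_comp_fst_comp_Tquart {c : ℤ → ℂ} (hc : IsQuarticSolution a c) :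
    coeffPairing c ∘ₗ LinearMap.fst ℂ _ _ ∘ₗ Tquart a D = 0 := by
  refine LinearMap.prod_ext (linearMap_ext fun n => ?_) (linearMap_ext fun n => ?_)
  · simp [Tquart_T_zero a hD]
  · simpa [Tquart_zero_T a hD] using hc n

theorem coeffPairing_single_comp_snd_comp_Tquart :
    coeffPairing (Pi.single (-1) 1) ∘ₗ LinearMap.snd ℂ _ _ ∘ₗ Tquart a D = 0 := by
  refine LinearMap.prod_ext (linearMap_ext fun n => ?_) (linearMap_ext fun n => ?_)
  · simp only [LinearMap.coe_comp, Function.comp_apply, LinearMap.inl_apply,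
      Tquart_T_zero a hD, LinearMap.snd_apply, map_smul, coeffPairing_T, LinearMap.zero_apply]
    rcases eq_or_ne n 0 with rfl | hn <;> simp [*]
  · simp [Tquart_zero_T a hD]

theorem quarticDual_comp_Tquart (i : Fin 5) : quarticDual a i ∘ₗ Tquart a D = 0 := by
  fin_cases i
  · exact coeffPairing_single_comp_snd_comp_Tquart a hD
  all_goals
    exact coeffPairing_comp_fst_comp_Tquart a hD (isQuarticSolution_quarticExtension a _)

theorem span_mkQ_quarticBasisRep :
    ⊤ ≤ Submodule.span ℂ
      (Set.range ((LinearMap.range (Tquart a D)).mkQ ∘ quarticBasisRep)) := by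
  set R := LinearMap.range (Tquart a D)
  set S := Submodule.span ℂ (Set.range (R.mkQ ∘ quarticBasisRep))
  have hrep (i : Fin 5) : R.mkQ (quarticBasisRep i) ∈ S := Submodule.subset_span ⟨i, rfl⟩
  have hfst (f : LaurentPolynomial ℂ) : (R.mkQ ∘ₗ LinearMap.inl ℂ _ _) f ∈ S := by
    refine mem_of_forall_T_mem (S := S.comap _)
      (fun n => (isQuarticSolution_mkQ_inl_T a hD).mem (S := S) (fun m h₁ h₂ => ?_) n) f
    obtain rfl | rfl | rfl | rfl : m = -1 ∨ m = 0 ∨ m = 1 ∨ m = 2 := by omega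
    · exact hrep 1
    · simpa [quarticBasisRep] using hrep 2
    · exact hrep 3
    · exact hrep 4
  have hsnd (g : LaurentPolynomial ℂ) : (R.mkQ ∘ₗ LinearMap.inr ℂ _ _) g ∈ S := by
    refine mem_of_forall_T_mem (S := S.comap _) (fun n => ?_) g
    rcases eq_or_ne n (-1) with rfl | hn
    · exact hrep 0
    · rw [Submodule.mem_comap, LinearMap.comp_apply, LinearMap.inr_apply, Submodule.mkQ_apply,
        (Submodule.Quotient.mk_eq_zero R).2 (zero_T_mem_range_Tquart a hD hn)]
      exact S.zero_mem
  rintro x -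
  obtain ⟨⟨f, g⟩, rfl⟩ := R.mkQ_surjective x
  rw [show (f, g) = (f, 0) + (0, g) by simp, map_add]
  exact S.add_mem (hfst f) (hsnd g)

end Quartic

theorem quartic_center_dim_five_general (a : ℂ)
    (D : LaurentPolynomial ℂ →ₗ[ℂ] LaurentPolynomial ℂ)
    (hD : ∀ n : ℤ, D (T n) = (n : ℂ) • T (n - 1)) :
    Module.finrank ℂ
        ((LaurentPolynomial ℂ × LaurentPolynomial ℂ) ⧸ LinearMap.range (Tquart a D)) = 5 ∧
    ∃ b : Module.Basis (Fin 5) ℂ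
        ((LaurentPolynomial ℂ × LaurentPolynomial ℂ) ⧸ LinearMap.range (Tquart a D)),
      b 0 = (LinearMap.range (Tquart a D)).mkQ (0, T (-1)) ∧
      b 1 = (LinearMap.range (Tquart a D)).mkQ (T (-1), 0) ∧
      b 2 = (LinearMap.range (Tquart a D)).mkQ (1, 0) ∧
      b 3 = (LinearMap.range (Tquart a D)).mkQ (T 1, 0) ∧
      b 4 = (LinearMap.range (Tquart a D)).mkQ (T 2, 0) := by
  set R := LinearMap.range (Tquart a D)
  let dual (i : Fin 5) : Module.Dual ℂ (_ ⧸ R) :=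
    R.liftQ (quarticDual a i) (LinearMap.range_le_ker_iff.2 (quarticDual_comp_Tquart a hD i))
  have hdual (i j : Fin 5) : dual i (R.mkQ (quarticBasisRep j)) = if i = j then 1 else 0 :=
    quarticDual_apply_quarticBasisRep a i j
  have hli : LinearIndependent ℂ (R.mkQ ∘ quarticBasisRep) :=
    .of_pairwise_dual_eq_zero_one _ dual (fun i j hij => (hdual i j).trans (if_neg hij))
      (fun i => (hdual i i).trans (if_pos rfl))
  let b := Module.Basis.mk hli (span_mkQ_quarticBasisRep a hD)
  refine ⟨by rw [Module.finrank_eq_card_basis b, Fintype.card_fin], b, ?_⟩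
  simp [b, quarticBasisRep]

/-- for `a ≠ ±1`, the quotient `V = (L × L)/range(T)` for the quartic
curve `u² = x⁴ - 2ax² + 1` is 5-dimensional with basis
`ω₀ = [X⁻¹u]`, `ω₁ = [X⁻¹]`, `ω₂ = [1]`, `ω₃ = [X]`, `ω₄ = [X²]`. -/
theorem quartic_center_dim_five (a : ℂ) (ha1 : a ≠ 1) (ha2 : a ≠ -1)
    (D : LaurentPolynomial ℂ →ₗ[ℂ] LaurentPolynomial ℂ)
    (hD : ∀ n : ℤ, D (T n) = (n : ℂ) • T (n - 1)) :
    Module.finrank ℂ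
        ((LaurentPolynomial ℂ × LaurentPolynomial ℂ) ⧸ LinearMap.range (Tquart a D)) = 5 ∧
    ∃ b : Module.Basis (Fin 5) ℂ
        ((LaurentPolynomial ℂ × LaurentPolynomial ℂ) ⧸ LinearMap.range (Tquart a D)),
      b 0 = (LinearMap.range (Tquart a D)).mkQ (0, T (-1)) ∧
      b 1 = (LinearMap.range (Tquart a D)).mkQ (T (-1), 0) ∧
      b 2 = (LinearMap.range (Tquart a D)).mkQ (1, 0) ∧
      b 3 = (LinearMap.range (Tquart a D)).mkQ (T 1, 0) ∧
      b 4 = (LinearMap.range (Tquart a D)).mkQ (T 2, 0) :=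
  quartic_center_dim_five_general a D hD
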